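/- arXiv:math/0609111 — 5 statements merged into one kernel-verified Lean document; each statement's English description precedes it below -/
import Mathlib

section
/- If G is a connected graph on n vertices, x = (x_1,...,x_n) is an eigenvector with positive entries corresponding to the largest adjacency eigenvalue μ(G), and i, j are any two vertices, then x_i / x_j ≥ μ(G)^{-dist(i,j)}, where dist(i,j) is the graph distance between i and j. -/
open Classical in
noncomputable def adjMat {V : Type*} [Fintype V] (G : SimpleGraph V) :
    Matrix V V ℝ :=
  Matrix.of fun i j => if G.Adj i j then 1 else 0

def IsAdjEigenvalue {V : Type*} [Fintype V] (A : Matrix V V ℝ) (μ : ℝ) : Prop :=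
  ∃ x : V → ℝ, x ≠ 0 ∧ A.mulVec x = μ • x

def IsMaxAdjEigenvalue {V : Type*} [Fintype V] (A : Matrix V V ℝ) (μ : ℝ) : Prop :=
  IsAdjEigenvalue A μ ∧ ∀ ν, IsAdjEigenvalue A ν → ν ≤ μ

def IsMinAdjEigenvalue {V : Type*} [Fintype V] (A : Matrix V V ℝ) (μ : ℝ) : Prop :=
  IsAdjEigenvalue A μ ∧ ∀ ν, IsAdjEigenvalue A ν → μ ≤ ν

theorem stmt0 {n : ℕ} (G : SimpleGraph (Fin n)) (hG : G.Connected)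
    (μ : ℝ) (x : Fin n → ℝ) (hxpos : ∀ i, 0 < x i)
    (hmax : IsMaxAdjEigenvalue (adjMat G) μ)
    (heig : (adjMat G).mulVec x = μ • x) (i j : Fin n) :
    x i / x j ≥ μ ^ (-(G.dist i j : ℤ)) := by
  have key : ∀ {a b : Fin n} (p : G.Walk a b), μ ^ (-(p.length : ℤ)) * x b ≤ x a := by
    classical
    intro a b p
    induction p with
    | nil => simp
    | @cons a c b h q ih =>
      -- μ * x a = (A x) a ≥ x c
      have hAx : μ * x a = ∑ l, (if G.Adj a l then (1:ℝ) else 0) * x l := by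
        have := congrFun heig a
        simp [Matrix.mulVec, dotProduct, adjMat, Pi.smul_apply, smul_eq_mul] at this
        rw [← this]
        exact Finset.sum_congr rfl fun l _ => by by_cases hl : G.Adj a l <;> simp [hl]
      have hle : x c ≤ μ * x a := by
        rw [hAx]
        calc x c = (if G.Adj a c then (1:ℝ) else 0) * x c := by simp [h]
        _ ≤ ∑ l, (if G.Adj a l then (1:ℝ) else 0) * x l := by
            apply Finset.single_le_sum (f := fun l => (if G.Adj a l then (1:ℝ) else 0) * x l)
            · intro l _
              by_cases hl : G.Adj a l <;> simp [hl, (hxpos l).le]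
            · exact Finset.mem_univ c
      have hμ : 0 < μ := by
        nlinarith [hxpos a, hxpos c]
      have : μ ^ (-(q.length : ℤ)) * x b ≤ x c := ih
      calc μ ^ (-((q.cons h).length : ℤ)) * x b
          = μ⁻¹ * (μ ^ (-(q.length : ℤ)) * x b) := by
            rw [SimpleGraph.Walk.length_cons]
            push_cast
            rw [neg_add, zpow_add₀ (ne_of_gt hμ), zpow_neg_one]
            ring
        _ ≤ μ⁻¹ * x c := by
            apply mul_le_mul_of_nonneg_left this (by positivity)
        _ ≤ x a := by
            rw [inv_mul_le_iff₀ hμ]; linarith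
  obtain ⟨p, hp⟩ := hG.exists_walk_length_eq_dist i j
  have := key p
  rw [hp] at this
  rw [ge_iff_le, le_div_iff₀ (hxpos j)]
  linarith
end

section
/- If G is a connected graph on n vertices and x is a positive unit eigenvector for the largest adjacency eigenvalue μ(G), then the ratio of the minimal entry of x to the maximal entry of x is at least μ(G)^{-(n-1)}. -/
theorem stmt1 {n : ℕ} (hn : 2 ≤ n) (G : SimpleGraph (Fin n)) (hG : G.Connected)
    (μ : ℝ) (x : Fin n → ℝ) (hxpos : ∀ i, 0 < x i)
    (hunit : ∑ i, x i ^ 2 = 1)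
    (hmax : IsMaxAdjEigenvalue (adjMat G) μ)
    (heig : (adjMat G).mulVec x = μ • x) :
    sInf (Set.range x) / sSup (Set.range x) ≥ μ ^ (-(n - 1 : ℤ)) := by
  classical
  -- edge inequality
  have hedge : ∀ i j, G.Adj i j → x j ≤ μ * x i := by
    intro i j hij
    have h := congrFun heig i
    simp only [Matrix.mulVec, dotProduct, Pi.smul_apply, smul_eq_mul] at h
    rw [← h]
    calc x j = adjMat G i j * x j := by simp [adjMat, hij]
      _ ≤ ∑ k, adjMat G i k * x k := by
          apply Finset.single_le_sum (fun k _ => ?_) (Finset.mem_univ j)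
          apply mul_nonneg _ (hxpos k).le
          simp only [adjMat, Matrix.of_apply]
          split <;> norm_num
  -- there is an edge
  have h01 : (⟨0, by omega⟩ : Fin n) ≠ ⟨1, by omega⟩ := by
    simp [Fin.ext_iff]
  obtain ⟨w⟩ := hG.preconnected ⟨0, by omega⟩ ⟨1, by omega⟩
  have hwn : ¬ w.Nil := SimpleGraph.Walk.not_nil_of_ne h01
  have hadj := w.adj_snd hwn
  have hμpos : 0 < μ := by
    have h1 := hedge _ _ hadj
    nlinarith [hxpos (⟨0, by omega⟩ : Fin n), hxpos (w.getVert 1)]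
  have hμ1 : 1 ≤ μ := by
    have h1 := hedge _ _ hadj
    have h2 := hedge _ _ hadj.symm
    nlinarith [hxpos (⟨0, by omega⟩ : Fin n), hxpos (w.getVert 1)]
  -- walk inequality
  have hwalk : ∀ (a b : Fin n) (p : G.Walk a b), x b ≤ μ ^ p.length * x a := by
    intro a b p
    induction p with
    | nil => simp
    | @cons a c b h q ih =>
      have h1 := hedge _ _ h
      have h2 : μ ^ q.length * x c ≤ μ ^ q.length * (μ * x a) :=
        mul_le_mul_of_nonneg_left h1 (pow_nonneg hμpos.le _)
      calc x b ≤ μ ^ q.length * x c := ih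
        _ ≤ μ ^ q.length * (μ * x a) := h2
        _ = μ ^ (SimpleGraph.Walk.cons h q).length * x a := by
            rw [SimpleGraph.Walk.length_cons, pow_succ]; ring
  -- extremal points
  have hfin : (Set.range x).Finite := Set.finite_range x
  have : Nonempty (Fin n) := ⟨⟨0, by omega⟩⟩
  have hne : (Set.range x).Nonempty := Set.range_nonempty x
  obtain ⟨v, hv⟩ := hne.csInf_mem hfin
  obtain ⟨u, hu⟩ := hne.csSup_mem hfin
  -- path from v to u
  obtain ⟨p⟩ := hG.preconnected v u
  obtain ⟨q, hq⟩ := p.toPath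
  have hql : q.length ≤ n - 1 := by
    have := hq.length_lt
    simp only [Fintype.card_fin] at this
    omega
  have hkey : x u ≤ μ ^ (n - 1) * x v := by
    calc x u ≤ μ ^ q.length * x v := hwalk _ _ q
      _ ≤ μ ^ (n - 1) * x v :=
        mul_le_mul_of_nonneg_right (pow_le_pow_right₀ hμ1 hql) (hxpos v).le
  have hzp : μ ^ (-(n - 1 : ℤ)) = (μ ^ (n - 1 : ℕ))⁻¹ := by
    rw [zpow_neg]
    congr 1
    rw [← zpow_natCast]
    congr 1
    omega
  rw [ge_iff_le, hzp, ← hv, ← hu]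
  rw [le_div_iff₀ (hxpos u), inv_mul_le_iff₀ (pow_pos hμpos _)]
  linarith [hkey]
end

section
/- If G is a connected graph of order n ≥ 3 and diameter D, then μ(G)^D > n/√3, where μ(G) is the largest adjacency eigenvalue of G. -/
/-!
Let `y ≥ 0` be an eigenvector of the adjacency matrix `A` for `μ`: for any eigenvector `x`,
`|x|` has Rayleigh quotient at least `μ`, and since `μ • 1 - A` is positive semidefinite this
forces `A |x| = μ |x|`. Any two vertices are joined by a walk of length `D - 1` or `D` (match the
parity of their distance, then pad by going back and forth along an edge), so every entry of
`A^(D-1) + A^D` is at least `1`. Reading `(A^(D-1) + A^D) y = (μ^(D-1) + μ^D) y` at a smallest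
coordinate of `y` gives `n ≤ μ^(D-1) (1 + μ)`. A vertex of degree `≥ 2` gives `μ² ≥ 2`, and then
`1 + μ < √3 μ`.
-/

namespace Matrix

variable {V : Type*} [Fintype V]

lemma posSemidef_smul_one_sub [DecidableEq V] {A : Matrix V V ℝ} (hA : A.IsHermitian) {μ : ℝ}
    (hmax : ∀ ν, IsAdjEigenvalue A ν → ν ≤ μ) : (μ • 1 - A).PosSemidef := by
  have hB : (μ • 1 - A).IsHermitian :=
    (isHermitian_one.smul (IsSelfAdjoint.all μ)).sub hA
  rw [hB.posSemidef_iff_eigenvalues_nonneg]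
  intro i
  have hv : ⇑(hB.eigenvectorBasis i) ≠ 0 := by
    simpa using (hB.eigenvectorBasis.orthonormal.ne_zero i)
  have hAv :
      A *ᵥ ⇑(hB.eigenvectorBasis i) = (μ - hB.eigenvalues i) • ⇑(hB.eigenvectorBasis i) := by
    have h := hB.mulVec_eigenvectorBasis i
    rw [sub_mulVec, smul_mulVec, one_mulVec] at h
    rw [sub_smul, ← h]
    abel
  simpa using hmax _ ⟨_, hv, hAv⟩

lemma exists_nonneg_eigenvector [DecidableEq V] {A : Matrix V V ℝ} (hA : A.IsHermitian)
    (hA0 : ∀ i j, 0 ≤ A i j) {μ : ℝ} (hmax : IsMaxAdjEigenvalue A μ) :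
    ∃ y : V → ℝ, y ≠ 0 ∧ 0 ≤ y ∧ A *ᵥ y = μ • y := by
  obtain ⟨x, hx0, hAx⟩ := hmax.1
  have hB := posSemidef_smul_one_sub hA hmax.2
  have habs : |x| ⬝ᵥ |x| = x ⬝ᵥ x := by simp [dotProduct, abs_mul_abs_self]
  have hquad : x ⬝ᵥ A *ᵥ x ≤ |x| ⬝ᵥ A *ᵥ |x| := by
    simp only [dotProduct, mulVec, Finset.mul_sum]
    refine Finset.sum_le_sum fun i _ => Finset.sum_le_sum fun j _ => ?_
    simpa [abs_mul, abs_of_nonneg (hA0 i j)] using le_abs_self (x i * (A i j * x j))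
  have hzero : star |x| ⬝ᵥ (μ • 1 - A) *ᵥ |x| = 0 := by
    refine le_antisymm ?_ (hB.dotProduct_mulVec_nonneg _)
    rw [star_trivial, sub_mulVec, smul_mulVec, one_mulVec, dotProduct_sub, dotProduct_smul, habs]
    rw [hAx, dotProduct_smul] at hquad
    simpa using hquad
  refine ⟨|x|, by simpa using hx0, abs_nonneg x, ?_⟩
  have hfix := hB.dotProduct_mulVec_zero_iff |x| |>.mp hzero
  rw [sub_mulVec, smul_mulVec, one_mulVec, sub_eq_zero] at hfix
  exact hfix.symm

lemma pow_mulVec_eq_pow_smul {R : Type*} [CommSemiring R] [DecidableEq V] {A : Matrix V V R}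
    {μ : R} {y : V → R} (h : A *ᵥ y = μ • y) (k : ℕ) : A ^ k *ᵥ y = μ ^ k • y := by
  induction k with
  | zero => simp
  | succ k ih => rw [pow_succ', ← mulVec_mulVec, ih, mulVec_smul, h, smul_smul, pow_succ]

section NonnegEigenvector

variable {M : Matrix V V ℝ} {y : V → ℝ} {c : ℝ}

lemma sum_mul_eq_of_mulVec_eq_smul (h : M *ᵥ y = c • y) (i : V) :
    ∑ j, M i j * y j = c * y i := by
  simpa [mulVec, dotProduct] using congrFun h i

lemma apply_mul_le_of_mulVec_eq_smul (hM : ∀ i j, 0 ≤ M i j) (hy : 0 ≤ y)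
    (h : M *ᵥ y = c • y) (i j : V) : M i j * y j ≤ c * y i := by
  rw [← sum_mul_eq_of_mulVec_eq_smul h i]
  exact Finset.single_le_sum (fun k _ => mul_nonneg (hM i k) (hy k)) (Finset.mem_univ j)

lemma sum_le_mul_of_mulVec_eq_smul (hM : ∀ i j, 1 ≤ M i j) (hy : 0 ≤ y)
    (h : M *ᵥ y = c • y) (i : V) : ∑ j, y j ≤ c * y i := by
  rw [← sum_mul_eq_of_mulVec_eq_smul h i]
  exact Finset.sum_le_sum fun j _ => le_mul_of_one_le_left (hy j) (hM i j)

lemma pos_of_mulVec_eq_smul (hM : ∀ i j, 1 ≤ M i j) (hy : 0 ≤ y) (hy0 : y ≠ 0)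
    (h : M *ᵥ y = c • y) (i : V) : 0 < y i := by
  obtain ⟨j, hj⟩ := Function.ne_iff.1 hy0
  have hsum : 0 < ∑ k, y k :=
    Finset.sum_pos' (fun k _ => hy k) ⟨j, Finset.mem_univ j, lt_of_le_of_ne (hy j) (Ne.symm hj)⟩
  refine lt_of_le_of_ne (hy i) fun hi => ?_
  have := sum_le_mul_of_mulVec_eq_smul hM hy h i
  rw [← hi, mul_zero] at this
  linarith

lemma card_le_of_mulVec_eq_smul (hM : ∀ i j, 1 ≤ M i j) (hy : 0 ≤ y) (hy0 : y ≠ 0)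
    (h : M *ᵥ y = c • y) : (Fintype.card V : ℝ) ≤ c := by
  obtain ⟨j, -⟩ := Function.ne_iff.1 hy0
  obtain ⟨i, -, hmin⟩ := Finset.exists_min_image Finset.univ y ⟨j, Finset.mem_univ j⟩
  refine le_of_mul_le_mul_right ?_ (pos_of_mulVec_eq_smul hM hy hy0 h i)
  calc (Fintype.card V : ℝ) * y i = ∑ _k : V, y i := by simp
    _ ≤ ∑ k, y k := Finset.sum_le_sum fun k _ => hmin k (Finset.mem_univ k)
    _ ≤ c * y i := sum_le_mul_of_mulVec_eq_smul hM hy h i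

end NonnegEigenvector

end Matrix

namespace SimpleGraph

variable {V : Type*} {G : SimpleGraph V}

lemma Walk.exists_length_eq_add_two_mul {u v w : V} (huw : G.Adj u w) (p : G.Walk u v) (m : ℕ) :
    ∃ q : G.Walk u v, q.length = p.length + 2 * m := by
  induction m with
  | zero => exact ⟨p, rfl⟩
  | succ m ih =>
    obtain ⟨q, hq⟩ := ih
    exact ⟨.cons huw (.cons huw.symm q), by simp only [Walk.length_cons, hq]; ring⟩

lemma Reachable.exists_walk_length_eq {u v w : V} (huv : G.Reachable u v) (huw : G.Adj u w)
    {k : ℕ} (hk : G.dist u v ≤ k) (hpar : G.dist u v % 2 = k % 2) :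
    ∃ q : G.Walk u v, q.length = k := by
  obtain ⟨p, hp⟩ := huv.exists_walk_length_eq_dist
  obtain ⟨q, hq⟩ := p.exists_length_eq_add_two_mul huw ((k - G.dist u v) / 2)
  exact ⟨q, by omega⟩

lemma two_le_degree_of_adj_of_adj [Fintype V] [DecidableRel G.Adj] {a b c : V} (hac : a ≠ c)
    (hba : G.Adj b a) (hbc : G.Adj b c) : 2 ≤ G.degree b := by
  classical
  rw [← card_neighborFinset_eq_degree, ← Finset.card_pair hac]
  exact Finset.card_le_card (by simp [Finset.insert_subset_iff, hba, hbc])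

lemma Reachable.exists_two_le_degree_of_two_le_dist [Fintype V] [DecidableRel G.Adj] {u v : V}
    (huv : G.Reachable u v) (h : 2 ≤ G.dist u v) : ∃ b, 2 ≤ G.degree b := by
  obtain ⟨p, hp⟩ := huv.exists_walk_length_eq_dist
  match p with
  | .nil => simp at h
  | .cons _ .nil => simp at hp; omega
  | .cons (v := b) hub (.cons (v := c) hbc r) =>
    refine ⟨b, two_le_degree_of_adj_of_adj (fun huc => ?_) hub.symm hbc⟩
    subst huc
    have := dist_le r
    simp only [Walk.length_cons] at hp
    omega

lemma Connected.exists_two_le_degree [Fintype V] [DecidableRel G.Adj] (hG : G.Connected)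
    (hV : 2 < Fintype.card V) : ∃ b, 2 ≤ G.degree b := by
  obtain ⟨a, b, c, hab, hac, hbc⟩ := Fintype.two_lt_card_iff.1 hV
  by_cases hba : G.Adj b a
  · by_cases hbc' : G.Adj b c
    · exact ⟨b, two_le_degree_of_adj_of_adj hac hba hbc'⟩
    · exact (hG b c).exists_two_le_degree_of_two_le_dist
        (hG.one_lt_dist_of_ne_of_not_adj hbc hbc')
  · exact (hG b a).exists_two_le_degree_of_two_le_dist
      (hG.one_lt_dist_of_ne_of_not_adj hab.symm hba)

section AdjMatrix

open Matrix

variable [Fintype V] [DecidableEq V] [DecidableRel G.Adj]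

lemma one_le_adjMatrix_pow_apply {u v : V} (p : G.Walk u v) :
    1 ≤ (G.adjMatrix ℝ ^ p.length) u v := by
  rw [adjMatrix_pow_apply_eq_card_walk]
  have : Nonempty {q : G.Walk u v | q.length = p.length} := ⟨⟨p, rfl⟩⟩
  exact_mod_cast Fintype.card_pos

lemma adjMatrix_pow_apply_nonneg (k : ℕ) (u v : V) : 0 ≤ (G.adjMatrix ℝ ^ k) u v := by
  rw [adjMatrix_pow_apply_eq_card_walk]
  positivity

lemma nonneg_of_adjMatrix_mulVec_eq_smul {y : V → ℝ} {μ : ℝ} (hy : 0 ≤ y)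
    (hAy : G.adjMatrix ℝ *ᵥ y = μ • y) {b : V} (hyb : 0 < y b) : 0 ≤ μ := by
  have := apply_mul_le_of_mulVec_eq_smul (by simpa using G.adjMatrix_pow_apply_nonneg 1) hy hAy
    b b
  rw [adjMatrix_apply, if_neg (G.irrefl), zero_mul] at this
  exact nonneg_of_mul_nonneg_left this hyb

lemma degree_le_sq_of_adjMatrix_mulVec_eq_smul {y : V → ℝ} {μ : ℝ} (hy : 0 ≤ y)
    (hAy : G.adjMatrix ℝ *ᵥ y = μ • y) {b : V} (hyb : 0 < y b) : (G.degree b : ℝ) ≤ μ ^ 2 := by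
  have := apply_mul_le_of_mulVec_eq_smul (G.adjMatrix_pow_apply_nonneg 2) hy
    (pow_mulVec_eq_pow_smul hAy 2) b b
  rw [sq, adjMatrix_mul_self_apply_self] at this
  exact le_of_mul_le_mul_right this hyb

lemma Connected.one_le_adjMatrix_pow_pred_add_pow_apply [Nontrivial V] (hG : G.Connected)
    {D : ℕ} (hD : ∀ u v, G.dist u v ≤ D) (u v : V) :
    1 ≤ (G.adjMatrix ℝ ^ (D - 1) + G.adjMatrix ℝ ^ D) u v := by
  obtain ⟨w, huw⟩ := hG.preconnected.exists_adj_of_nontrivial u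
  rw [Matrix.add_apply]
  by_cases hpar : G.dist u v % 2 = D % 2
  · obtain ⟨p, hp⟩ := (hG u v).exists_walk_length_eq huw (hD u v) hpar
    linarith [hp ▸ one_le_adjMatrix_pow_apply p, G.adjMatrix_pow_apply_nonneg (D - 1) u v]
  · have hlt : G.dist u v < D := lt_of_le_of_ne (hD u v) (by rintro h; simp [h] at hpar)
    obtain ⟨p, hp⟩ := (hG u v).exists_walk_length_eq huw (k := D - 1) (by omega) (by omega)
    linarith [hp ▸ one_le_adjMatrix_pow_apply p, G.adjMatrix_pow_apply_nonneg D u v]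

end AdjMatrix

end SimpleGraph

lemma adjMat_eq_adjMatrix {V : Type*} [Fintype V] (G : SimpleGraph V) [DecidableRel G.Adj] :
    adjMat G = G.adjMatrix ℝ := by
  ext i j
  by_cases h : G.Adj i j <;> simp [adjMat, h]

lemma one_add_lt_sqrt_three_mul {μ : ℝ} (hμ : 0 ≤ μ) (hμ2 : 2 ≤ μ ^ 2) : 1 + μ < √3 * μ := by
  have h3 : √3 ^ 2 = 3 := Real.sq_sqrt (by norm_num)
  have hμ14 : 1.4 < μ := by nlinarith
  refine lt_of_pow_lt_pow_left₀ 2 (by positivity) ?_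
  rw [mul_pow, h3]
  nlinarith

lemma pow_pred_add_pow_lt_sqrt_three_mul_pow {μ : ℝ} (hμ : 0 ≤ μ) (hμ2 : 2 ≤ μ ^ 2) {D : ℕ}
    (hD : D ≠ 0) : μ ^ (D - 1) + μ ^ D < √3 * μ ^ D := by
  obtain ⟨k, rfl⟩ := Nat.exists_eq_succ_of_ne_zero hD
  have hk : 0 < μ ^ k := pow_pos (by nlinarith) k
  calc μ ^ (k + 1 - 1) + μ ^ (k + 1) = μ ^ k * (1 + μ) := by simp [pow_succ]; ring
    _ < μ ^ k * (√3 * μ) := mul_lt_mul_of_pos_left (one_add_lt_sqrt_three_mul hμ hμ2) hk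
    _ = √3 * μ ^ (k + 1) := by ring

theorem stmt2_general {n : ℕ} (hn : 3 ≤ n) (G : SimpleGraph (Fin n)) (hG : G.Connected)
    (D : ℕ) (hD1 : ∀ u v, G.dist u v ≤ D)
    (μ : ℝ) (hmax : IsMaxAdjEigenvalue (adjMat G) μ) :
    μ ^ D > (n : ℝ) / Real.sqrt 3 := by
  classical
  have : Nontrivial (Fin n) := Fin.nontrivial_iff_two_le.2 (by omega)
  set A := G.adjMatrix ℝ
  rw [adjMat_eq_adjMatrix] at hmax
  obtain ⟨y, hy0, hy, hAy⟩ := Matrix.exists_nonneg_eigenvector (G.isHermitian_adjMatrix ℝ)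
    (by simpa using G.adjMatrix_pow_apply_nonneg 1) hmax
  have hMy : (A ^ (D - 1) + A ^ D).mulVec y = (μ ^ (D - 1) + μ ^ D) • y := by
    rw [Matrix.add_mulVec, Matrix.pow_mulVec_eq_pow_smul hAy, Matrix.pow_mulVec_eq_pow_smul hAy,
      add_smul]
  have hM := hG.one_le_adjMatrix_pow_pred_add_pow_apply hD1
  have hcard : (n : ℝ) ≤ μ ^ (D - 1) + μ ^ D := by
    simpa using Matrix.card_le_of_mulVec_eq_smul hM hy hy0 hMy
  obtain ⟨b, hb⟩ := hG.exists_two_le_degree (by simp; omega)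
  have hyb := Matrix.pos_of_mulVec_eq_smul hM hy hy0 hMy b
  have hμ2 : 2 ≤ μ ^ 2 :=
    le_trans (by exact_mod_cast hb) (G.degree_le_sq_of_adjMatrix_mulVec_eq_smul hy hAy hyb)
  have hD : D ≠ 0 := by
    obtain ⟨u, v, huv⟩ := exists_pair_ne (Fin n)
    have := hG.pos_dist_of_ne huv
    have := hD1 u v
    omega
  rw [gt_iff_lt, div_lt_iff₀ (by positivity), mul_comm]
  exact hcard.trans_lt (pow_pred_add_pow_lt_sqrt_three_mul_pow
    (G.nonneg_of_adjMatrix_mulVec_eq_smul hy hAy hyb) hμ2 hD)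

theorem stmt2 {n : ℕ} (hn : 3 ≤ n) (G : SimpleGraph (Fin n)) (hG : G.Connected)
    (D : ℕ) (hD1 : ∀ u v, G.dist u v ≤ D) (hD2 : ∃ u v, G.dist u v = D)
    (μ : ℝ) (hmax : IsMaxAdjEigenvalue (adjMat G) μ) :
    μ ^ D > (n : ℝ) / Real.sqrt 3 :=
  stmt2_general hn G hG D hD1 μ hmax
end

section
/- If H is a proper subgraph of a connected graph G of order n and diameter D, then μ(G) − μ(H) > 1/(μ(G)^{2D} · n), where μ denotes the largest adjacency eigenvalue. -/
open Matrix Finset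
open scoped MatrixOrder

section MaxEigenvalue

variable {ι : Type*} [Fintype ι] {A : Matrix ι ι ℝ} {μ : ℝ}

namespace Matrix

theorem mulVec_nonneg (hA : ∀ i j, 0 ≤ A i j) {y : ι → ℝ} (hy : 0 ≤ y) : 0 ≤ A *ᵥ y :=
  fun i => sum_nonneg fun j _ => mul_nonneg (hA i j) (hy j)

theorem apply_mul_le_mulVec_apply (hA : ∀ i j, 0 ≤ A i j) {y : ι → ℝ} (hy : 0 ≤ y) (i j : ι) :
    A i j * y j ≤ (A *ᵥ y) i :=
  single_le_sum (f := fun k => A i k * y k) (fun k _ => mul_nonneg (hA i k) (hy k)) (mem_univ j)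

theorem apply_mul_apply_le_dotProduct {x y : ι → ℝ} (hx : 0 ≤ x) (hy : 0 ≤ y) (i : ι) :
    x i * y i ≤ x ⬝ᵥ y :=
  single_le_sum (f := fun k => x k * y k) (fun k _ => mul_nonneg (hx k) (hy k)) (mem_univ i)

theorem dotProduct_le_card_mul {x y : ι → ℝ} {X Y : ℝ} (hxX : ∀ i, x i ≤ X) (hX : 0 ≤ X)
    (hy : 0 ≤ y) (hyY : ∀ i, y i ≤ Y) : x ⬝ᵥ y ≤ Fintype.card ι * (X * Y) := by
  calc x ⬝ᵥ y ≤ ∑ _i : ι, X * Y :=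
        sum_le_sum fun i _ => mul_le_mul (hxX i) (hyY i) (hy i) hX
    _ = Fintype.card ι * (X * Y) := by rw [sum_const, card_univ, nsmul_eq_mul]

theorem abs_dotProduct_mulVec_le (hA : ∀ i j, 0 ≤ A i j) (x y : ι → ℝ) :
    |x ⬝ᵥ A *ᵥ y| ≤ |x| ⬝ᵥ A *ᵥ |y| := by
  simp only [dotProduct, mulVec, Finset.mul_sum]
  refine (abs_sum_le_sum_abs _ _).trans (sum_le_sum fun i _ => ?_)
  refine (abs_sum_le_sum_abs _ _).trans (sum_le_sum fun j _ => ?_)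
  simp [abs_mul, abs_of_nonneg (hA i j)]

end Matrix

theorem IsAdjEigenvalue.eq_zero_of_eq_zero (h : IsAdjEigenvalue (0 : Matrix ι ι ℝ) μ) :
    μ = 0 := by
  obtain ⟨x, hx, hμx⟩ := h
  rw [zero_mulVec, eq_comm, smul_eq_zero] at hμx
  exact hμx.resolve_right hx

namespace IsMaxAdjEigenvalue

theorem posSemidef_smul_one_sub [DecidableEq ι] (hA : A.IsHermitian)
    (h : IsMaxAdjEigenvalue A μ) : (μ • 1 - A).PosSemidef := by
  have hle : A ≤ algebraMap ℝ _ μ := by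
    refine le_algebraMap_of_spectrum_le (fun ν hν => ?_) hA.isSelfAdjoint
    obtain ⟨i, rfl⟩ := hA.spectrum_real_eq_range_eigenvalues ▸ hν
    exact h.2 _ ⟨_, by simpa using hA.eigenvectorBasis.orthonormal.ne_zero i,
      hA.mulVec_eigenvectorBasis i⟩
  simpa [Matrix.le_iff, Algebra.algebraMap_eq_smul_one] using hle

theorem dotProduct_mulVec_le (hA : A.IsHermitian) (h : IsMaxAdjEigenvalue A μ) (x : ι → ℝ) :
    x ⬝ᵥ A *ᵥ x ≤ μ * (x ⬝ᵥ x) := by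
  classical
  have := (h.posSemidef_smul_one_sub hA).dotProduct_mulVec_nonneg x
  simp only [star_trivial, sub_mulVec, smul_mulVec, one_mulVec, dotProduct_sub,
    dotProduct_smul, smul_eq_mul] at this
  linarith

theorem mulVec_eq_smul_of_dotProduct_mulVec_eq (hA : A.IsHermitian)
    (h : IsMaxAdjEigenvalue A μ) {x : ι → ℝ} (hx : x ⬝ᵥ A *ᵥ x = μ * (x ⬝ᵥ x)) :
    A *ᵥ x = μ • x := by
  classical
  have := ((h.posSemidef_smul_one_sub hA).dotProduct_mulVec_zero_iff x).1 (by
    simp only [star_trivial, sub_mulVec, smul_mulVec, one_mulVec, dotProduct_sub,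
      dotProduct_smul, smul_eq_mul, hx, sub_self])
  rw [sub_mulVec, smul_mulVec, one_mulVec, sub_eq_zero] at this
  exact this.symm

theorem exists_nonneg_eigenvector (hA : A.IsHermitian) (hA0 : ∀ i j, 0 ≤ A i j)
    (h : IsMaxAdjEigenvalue A μ) : ∃ y : ι → ℝ, y ≠ 0 ∧ 0 ≤ y ∧ A *ᵥ y = μ • y := by
  obtain ⟨x, hx, hAx⟩ := h.1
  refine ⟨|x|, by simpa using hx, abs_nonneg x, h.mulVec_eq_smul_of_dotProduct_mulVec_eq hA ?_⟩
  -- `|x|` attains the maximal Rayleigh quotient, and every maximizer is an eigenvector.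
  refine le_antisymm (h.dotProduct_mulVec_le hA _) ?_
  have hxx : |x| ⬝ᵥ |x| = x ⬝ᵥ x := by simp [dotProduct, abs_mul_abs_self]
  calc μ * (|x| ⬝ᵥ |x|) = x ⬝ᵥ A *ᵥ x := by rw [hxx, hAx, dotProduct_smul, smul_eq_mul]
    _ ≤ |x ⬝ᵥ A *ᵥ x| := le_abs_self _
    _ ≤ |x| ⬝ᵥ A *ᵥ |x| := abs_dotProduct_mulVec_le hA0 x x

theorem apply_self_le (hA : A.IsHermitian) (h : IsMaxAdjEigenvalue A μ) (i : ι) :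
    A i i ≤ μ := by
  classical
  simpa using h.dotProduct_mulVec_le hA (Pi.single i 1)

theorem add_apply_le (hA : A.IsHermitian) (h : IsMaxAdjEigenvalue A μ) {i j : ι}
    (hij : i ≠ j) : A i i + A i j + A j i + A j j ≤ 2 * μ := by
  classical
  set x : ι → ℝ := Pi.single i 1 + Pi.single j 1
  have hxAx : x ⬝ᵥ A *ᵥ x = A i i + A i j + A j i + A j j := by
    simp only [x, mulVec_add, mulVec_single, MulOpposite.op_one, one_smul, dotProduct_add,
      add_dotProduct, single_dotProduct, col_apply, one_mul]
    ring
  have hxx : x ⬝ᵥ x = 2 := by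
    simp only [x, dotProduct_add, dotProduct_single, Pi.add_apply, Pi.single_eq_same,
      Pi.single_eq_of_ne hij, Pi.single_eq_of_ne hij.symm, add_zero, zero_add, mul_one]
    norm_num
  have := h.dotProduct_mulVec_le hA x
  rw [hxAx, hxx] at this
  linarith

end IsMaxAdjEigenvalue

end MaxEigenvalue

section AdjMat

variable {V : Type*} [Fintype V] {G H : SimpleGraph V}

theorem adjMat_apply_nonneg (i j : V) : 0 ≤ adjMat G i j := by
  simp only [adjMat, of_apply]
  split_ifs <;> norm_num

theorem adjMat_apply_of_adj {i j : V} (h : G.Adj i j) : adjMat G i j = 1 := by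
  simp [adjMat, h]

theorem adjMat_apply_of_not_adj {i j : V} (h : ¬G.Adj i j) : adjMat G i j = 0 := by
  simp [adjMat, h]

theorem adjMat_apply_self (i : V) : adjMat G i i = 0 :=
  adjMat_apply_of_not_adj G.irrefl

theorem adjMat_isHermitian : (adjMat G).IsHermitian := by
  ext i j
  by_cases h : G.Adj i j
  · simp [adjMat_apply_of_adj h, adjMat_apply_of_adj h.symm]
  · simp [adjMat_apply_of_not_adj h, adjMat_apply_of_not_adj (mt SimpleGraph.Adj.symm h)]

theorem adjMat_sub_apply_nonneg (hHG : H ≤ G) (i j : V) : 0 ≤ (adjMat G - adjMat H) i j := by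
  by_cases h : H.Adj i j
  · simp [adjMat_apply_of_adj h, adjMat_apply_of_adj (hHG h)]
  · simpa [adjMat_apply_of_not_adj h] using adjMat_apply_nonneg i j

theorem adjMat_sub_apply_of_adj_of_not_adj {i j : V} (hG : G.Adj i j) (hH : ¬H.Adj i j) :
    (adjMat G - adjMat H) i j = 1 := by
  simp [adjMat_apply_of_adj hG, adjMat_apply_of_not_adj hH]

namespace IsMaxAdjEigenvalue

variable {μ : ℝ}

theorem nonneg [Nonempty V] (h : IsMaxAdjEigenvalue (adjMat G) μ) : 0 ≤ μ := by
  inhabit V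
  simpa [adjMat_apply_self] using h.apply_self_le adjMat_isHermitian default

theorem one_le_of_adj (h : IsMaxAdjEigenvalue (adjMat G) μ) {u v : V} (huv : G.Adj u v) :
    1 ≤ μ := by
  have := h.add_apply_le adjMat_isHermitian huv.ne
  simp only [adjMat_apply_self, adjMat_apply_of_adj huv, adjMat_apply_of_adj huv.symm] at this
  linarith

theorem eq_zero_of_lt_one (h : IsMaxAdjEigenvalue (adjMat G) μ) (hμ : μ < 1) : μ = 0 := by
  have hG : adjMat G = 0 := by
    ext i j
    exact adjMat_apply_of_not_adj fun hij => hμ.not_ge (h.one_le_of_adj hij)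
  exact (hG ▸ h.1).eq_zero_of_eq_zero

end IsMaxAdjEigenvalue

end AdjMat

section NonnegEigenvector

variable {V : Type*} [Fintype V] {G H : SimpleGraph V} {μ : ℝ} {y : V → ℝ}

theorem le_mul_of_adj (hy : 0 ≤ y) (hyA : adjMat G *ᵥ y = μ • y) {a c : V} (h : G.Adj a c) :
    y a ≤ μ * y c := by
  calc y a = adjMat G c a * y a := by rw [adjMat_apply_of_adj h.symm, one_mul]
    _ ≤ (adjMat G *ᵥ y) c := apply_mul_le_mulVec_apply adjMat_apply_nonneg hy c a
    _ = μ * y c := by rw [hyA, Pi.smul_apply, smul_eq_mul]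

theorem le_pow_length_mul (hμ : 0 ≤ μ) (hy : 0 ≤ y) (hyA : adjMat G *ᵥ y = μ • y) {a b : V}
    (p : G.Walk a b) : y a ≤ μ ^ p.length * y b := by
  induction p with
  | nil => simp
  | cons h q ih =>
    calc _ ≤ μ * _ := le_mul_of_adj hy hyA h
      _ ≤ μ * (μ ^ q.length * y _) := by gcongr
      _ = _ := by rw [SimpleGraph.Walk.length_cons, pow_succ]; ring

theorem le_pow_mul_of_forall_dist_le (hG : G.Connected) (hμ : 1 ≤ μ) (hy : 0 ≤ y)
    (hyA : adjMat G *ᵥ y = μ • y) {D : ℕ} (hD : ∀ a b, G.dist a b ≤ D) (a b : V) :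
    y a ≤ μ ^ D * y b := by
  obtain ⟨p, hp⟩ := hG.exists_walk_length_eq_dist a b
  calc y a ≤ μ ^ p.length * y b := le_pow_length_mul (by linarith) hy hyA p
    _ ≤ μ ^ D * y b := by
      have := hy b
      gcongr
      exact hp ▸ hD a b

/-- `s t` is the first edge missing from `H` on the walk `p` extended by the edge `e f`. -/
theorem exists_adj_not_adj_le_pow_mul (hμ : 0 ≤ μ) (hy : 0 ≤ y)
    (hyA : adjMat H *ᵥ y = μ • y) {b e f : V} (p : G.Walk b e) (hef : G.Adj e f)
    (hnef : ¬H.Adj e f) :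
    ∃ s t j, j ≤ p.length ∧ G.Adj s t ∧ ¬H.Adj s t ∧ y b ≤ μ ^ j * y s := by
  induction p with
  | nil => exact ⟨_, f, 0, le_rfl, hef, hnef, by simp⟩
  | @cons b c e hbc q ih =>
    by_cases hHbc : H.Adj b c
    · obtain ⟨s, t, j, hj, hst, hnst, hcs⟩ := ih hef hnef
      refine ⟨s, t, j + 1, by simpa using hj, hst, hnst, ?_⟩
      calc y b ≤ μ * y c := le_mul_of_adj hy hyA hHbc
        _ ≤ μ * (μ ^ j * y s) := by gcongr
        _ = μ ^ (j + 1) * y s := by ring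
    · exact ⟨b, c, 0, Nat.zero_le _, hbc, hHbc, by simp⟩

theorem mul_le_sub_mul_dotProduct {μG μH : ℝ} {z : V → ℝ} (hHG : H ≤ G) (hy : 0 ≤ y)
    (hyA : adjMat G *ᵥ y = μG • y) (hz : 0 ≤ z) (hzA : adjMat H *ᵥ z = μH • z) {s t : V}
    (hst : G.Adj s t) (hnst : ¬H.Adj s t) :
    y t * z s ≤ (μG - μH) * (y ⬝ᵥ z) := by
  set B := adjMat G - adjMat H
  have hB : ∀ i j, 0 ≤ B i j := adjMat_sub_apply_nonneg hHG
  have hyBz : y ⬝ᵥ B *ᵥ z = (μG - μH) * (y ⬝ᵥ z) := by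
    rw [sub_mulVec, dotProduct_sub, dotProduct_mulVec, ← mulVec_transpose,
      (isHermitian_iff_isSymm.1 adjMat_isHermitian).eq, hyA, hzA, smul_dotProduct,
      dotProduct_smul, smul_eq_mul, smul_eq_mul, sub_mul]
  have hBts : B t s = 1 :=
    adjMat_sub_apply_of_adj_of_not_adj hst.symm (mt SimpleGraph.Adj.symm hnst)
  calc y t * z s = y t * (B t s * z s) := by rw [hBts, one_mul]
    _ ≤ y t * (B *ᵥ z) t := by gcongr; exacts [hy t, apply_mul_le_mulVec_apply hB hz t s]
    _ ≤ y ⬝ᵥ B *ᵥ z := apply_mul_apply_le_dotProduct hy (mulVec_nonneg hB hz) t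
    _ = (μG - μH) * (y ⬝ᵥ z) := hyBz

end NonnegEigenvector

theorem pow_lt_pow_of_lt_of_one_lt {a b : ℝ} {j D : ℕ} (ha : 0 ≤ a) (hab : a < b) (hb : 1 < b)
    (hjD : j ≤ D) (hD : D ≠ 0) : a ^ j < b ^ D :=
  calc a ^ j ≤ max 1 a ^ j := pow_le_pow_left₀ ha (le_max_right _ _) j
    _ ≤ max 1 a ^ D := pow_le_pow_right₀ (le_max_left _ _) hjD
    _ < b ^ D := pow_lt_pow_left₀ (max_lt hb hab) (by positivity) hD

theorem exists_one_le_sub_mul_card_mul_pow {V : Type*} [Fintype V] {G H : SimpleGraph V}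
    (hG : G.Connected) {D : ℕ} (hD : ∀ a b, G.dist a b ≤ D) (hHG : H ≤ G) {u v : V}
    (huv : G.Adj u v) (hnuv : ¬H.Adj u v) {μG μH : ℝ}
    (hmaxG : IsMaxAdjEigenvalue (adjMat G) μG) (hmaxH : IsMaxAdjEigenvalue (adjMat H) μH) :
    ∃ j ≤ D, μH < μG ∧ 1 ≤ (μG - μH) * Fintype.card V * (μG ^ D * μH ^ j) := by
  have : Nonempty V := ⟨u⟩
  have hμG : 1 ≤ μG := hmaxG.one_le_of_adj huv
  have hμH : 0 ≤ μH := hmaxH.nonneg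
  obtain ⟨y, hy0, hy, hyA⟩ :=
    hmaxG.exists_nonneg_eigenvector adjMat_isHermitian adjMat_apply_nonneg
  obtain ⟨z, hz0, hz, hzA⟩ :=
    hmaxH.exists_nonneg_eigenvector adjMat_isHermitian adjMat_apply_nonneg
  obtain ⟨w, hw⟩ := Finite.exists_max z
  obtain ⟨p, hp⟩ := hG.exists_walk_length_eq_dist w u
  obtain ⟨s, t, j, hj, hst, hnst, hzw⟩ :=
    exists_adj_not_adj_le_pow_mul hμH hz hzA p huv hnuv
  have hyt : ∀ a, y a ≤ μG ^ D * y t := fun a => le_pow_mul_of_forall_dist_le hG hμG hy hyA hD a t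
  have hzs : ∀ a, z a ≤ μH ^ j * z s := fun a => (hw a).trans hzw
  have hpos : 0 < y t * z s := by
    obtain ⟨a, ha⟩ := Function.ne_iff.1 hy0
    obtain ⟨b, hb⟩ := Function.ne_iff.1 hz0
    have hya := (hy a).lt_of_ne' ha
    have hzb := (hz b).lt_of_ne' hb
    exact mul_pos (pos_of_mul_pos_right (hya.trans_le (hyt a)) (by positivity))
      (pos_of_mul_pos_right (hzb.trans_le (hzs b)) (by positivity))
  have hlow := mul_le_sub_mul_dotProduct hHG hy hyA hz hzA hst hnst
  have hgap : 0 < μG - μH :=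
    pos_of_mul_pos_left (hpos.trans_le hlow) (dotProduct_nonneg_of_nonneg hy hz)
  have hup := dotProduct_le_card_mul hyt (mul_nonneg (by positivity) (hy t)) hz hzs
  refine ⟨j, hj.trans (hp ▸ hD w u), by linarith, le_of_mul_le_mul_right ?_ hpos⟩
  calc 1 * (y t * z s) ≤ (μG - μH) * (y ⬝ᵥ z) := by rw [one_mul]; exact hlow
    _ ≤ (μG - μH) * (Fintype.card V * (μG ^ D * y t * (μH ^ j * z s))) := by gcongr
    _ = (μG - μH) * Fintype.card V * (μG ^ D * μH ^ j) * (y t * z s) := by ring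

theorem stmt5_general {n : ℕ} (G : SimpleGraph (Fin n)) (hG : G.Connected)
    (D : ℕ) (hD1 : ∀ u v, G.dist u v ≤ D)
    (H : SimpleGraph (Fin n)) (hHG : H ≤ G) (hne : H ≠ G)
    (μG μH : ℝ) (hmaxG : IsMaxAdjEigenvalue (adjMat G) μG)
    (hmaxH : IsMaxAdjEigenvalue (adjMat H) μH) :
    μG - μH > 1 / (μG ^ (2 * D) * n) := by
  obtain ⟨u, v, huv, hnuv⟩ : ∃ u v, G.Adj u v ∧ ¬H.Adj u v := by
    by_contra! h
    exact hne (le_antisymm hHG fun u v huv => h u v huv)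
  obtain ⟨j, hjD, hgap, hkey⟩ :=
    exists_one_le_sub_mul_card_mul_pow hG hD1 hHG huv hnuv hmaxG hmaxH
  rw [Fintype.card_fin] at hkey
  have : Nonempty (Fin n) := ⟨u⟩
  have hμG : 1 ≤ μG := hmaxG.one_le_of_adj huv
  have hD : D ≠ 0 := by
    have := SimpleGraph.dist_eq_one_iff_adj.2 huv ▸ hD1 u v
    omega
  have hn : 1 < n := by simpa using Fintype.one_lt_card_iff.2 ⟨u, v, huv.ne⟩
  rw [gt_iff_lt, div_lt_iff₀ (by positivity)]
  rcases hμG.lt_or_eq with hμG1 | rfl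
  · have hpow := pow_lt_pow_of_lt_of_one_lt hmaxH.nonneg hgap hμG1 hjD hD
    calc 1 ≤ (μG - μH) * n * (μG ^ D * μH ^ j) := hkey
      _ < (μG - μH) * n * (μG ^ D * μG ^ D) := by gcongr
      _ = (μG - μH) * (μG ^ (2 * D) * n) := by ring
  · rw [hmaxH.eq_zero_of_lt_one hgap]
    norm_num [hn]

theorem stmt5 {n : ℕ} (G : SimpleGraph (Fin n)) (hG : G.Connected)
    (D : ℕ) (hD1 : ∀ u v, G.dist u v ≤ D) (hD2 : ∃ u v, G.dist u v = D)
    (H : SimpleGraph (Fin n)) (hHG : H ≤ G) (hne : H ≠ G)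
    (μG μH : ℝ) (hmaxG : IsMaxAdjEigenvalue (adjMat G) μG)
    (hmaxH : IsMaxAdjEigenvalue (adjMat H) μH) :
    μG - μH > 1 / (μG ^ (2 * D) * n) :=
  stmt5_general G hG D hD1 H hHG hne μG μH hmaxG hmaxH
end

section
/- Let G be a connected graph with diameter D and let uv be an edge of G such that H = G − uv is connected. Then for every vertex w, dist_H(w,u) + dist_H(w,v) ≤ 2D, where dist_H denotes graph distance in H. -/
private lemma dist_getVert_le' {V : Type*} {G : SimpleGraph V} (hc : G.Connected)
    {x y : V} (W : G.Walk x y) (i : ℕ) :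
    G.dist x (W.getVert i) ≤ i ∧ G.dist (W.getVert i) y ≤ W.length - i := by
  induction W generalizing i with
  | nil => simp [SimpleGraph.Walk.getVert, SimpleGraph.dist_self]
  | @cons p' q' r' h p ih =>
    cases i with
    | zero =>
      simpa [SimpleGraph.dist_self] using SimpleGraph.dist_le (SimpleGraph.Walk.cons h p)
    | succ i =>
      obtain ⟨h1, h2⟩ := ih i
      rw [SimpleGraph.Walk.getVert_cons_succ]
      refine ⟨le_trans (hc.dist_triangle (v := q')) ?_, by simpa [Nat.succ_sub_succ] using h2⟩
      have hd : G.dist p' q' ≤ 1 :=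
        SimpleGraph.dist_le (SimpleGraph.Walk.cons h SimpleGraph.Walk.nil)
      omega

private lemma key_walk {V : Type*} {G : SimpleGraph V} (u v : V)
    (hH : (G.deleteEdges {s(u, v)}).Connected)
    {x y : V} (W : G.Walk x y) :
    (G.deleteEdges {s(u, v)}).dist x y ≤ W.length ∨
    (G.deleteEdges {s(u, v)}).dist x u + 1 + (G.deleteEdges {s(u, v)}).dist v y ≤ W.length ∨
    (G.deleteEdges {s(u, v)}).dist x v + 1 + (G.deleteEdges {s(u, v)}).dist u y ≤ W.length := by
  set H := G.deleteEdges {s(u, v)} with hHdef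
  induction W with
  | nil => left; simp [SimpleGraph.dist_self]
  | @cons a b c hab p ih =>
    by_cases he : s(a, b) = s(u, v)
    · rw [Sym2.eq_iff] at he
      rcases he with ⟨rfl, rfl⟩ | ⟨rfl, rfl⟩
      · rcases ih with h | h | h
        · refine Or.inr (Or.inl ?_)
          simp only [SimpleGraph.Walk.length_cons, SimpleGraph.dist_self] at *
          omega
        · refine Or.inr (Or.inl ?_)
          simp only [SimpleGraph.Walk.length_cons, SimpleGraph.dist_self] at *
          omega
        · refine Or.inl ?_
          simp only [SimpleGraph.Walk.length_cons, SimpleGraph.dist_self] at *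
          omega
      · rcases ih with h | h | h
        · refine Or.inr (Or.inr ?_)
          simp only [SimpleGraph.Walk.length_cons, SimpleGraph.dist_self] at *
          omega
        · refine Or.inl ?_
          simp only [SimpleGraph.Walk.length_cons, SimpleGraph.dist_self] at *
          omega
        · refine Or.inr (Or.inr ?_)
          simp only [SimpleGraph.Walk.length_cons, SimpleGraph.dist_self] at *
          omega
    · have hadjH : H.Adj a b := by
        rw [hHdef, SimpleGraph.deleteEdges_adj]
        exact ⟨hab, by simpa using he⟩
      have hd1 : H.dist a b ≤ 1 :=
        SimpleGraph.dist_le (SimpleGraph.Walk.cons hadjH SimpleGraph.Walk.nil)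
      have tri : ∀ z : V, H.dist a z ≤ 1 + H.dist b z := fun z =>
        le_trans (hH.dist_triangle (v := b)) (by omega)
      rcases ih with h | h | h
      · left
        have := tri c
        simp only [SimpleGraph.Walk.length_cons]
        omega
      · refine Or.inr (Or.inl ?_)
        have := tri u
        simp only [SimpleGraph.Walk.length_cons]
        omega
      · refine Or.inr (Or.inr ?_)
        have := tri v
        simp only [SimpleGraph.Walk.length_cons]
        omega

private lemma key_asym {n : ℕ} (G : SimpleGraph (Fin n)) (hG : G.Connected)
    (D : ℕ) (hD1 : ∀ a b, G.dist a b ≤ D)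
    (u v : Fin n) (huv : G.Adj u v)
    (hH : (G.deleteEdges {s(u, v)}).Connected) (w : Fin n)
    (hle : (G.deleteEdges {s(u, v)}).dist w v ≤ (G.deleteEdges {s(u, v)}).dist w u) :
    (G.deleteEdges {s(u, v)}).dist w u + (G.deleteEdges {s(u, v)}).dist w v ≤ 2 * D := by
  set H := G.deleteEdges {s(u, v)} with hHdef
  set a := H.dist w u with ha
  set b := H.dist w v with hb
  by_contra hcon
  push_neg at hcon
  have hab : 2 * D + 1 ≤ a + b := hcon
  have haD : D + 1 ≤ a := by omega
  -- first: b + 1 ≤ D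
  obtain ⟨W1, hW1⟩ := hG.exists_walk_length_eq_dist w u
  have h1 := key_walk u v hH W1
  simp only [← hHdef] at h1
  rw [hW1] at h1
  have hWu : G.dist w u ≤ D := hD1 w u
  have hself : H.dist u u = 0 := SimpleGraph.dist_self
  have hbD : b + 1 ≤ D := by
    rcases h1 with h | h | h
    · omega
    · omega
    · omega
  -- take shortest H-walk from u to w, vertex at position i = D - b
  obtain ⟨W2, hW2⟩ := hH.exists_walk_length_eq_dist u w
  have hW2len : W2.length = a := by rw [hW2, SimpleGraph.dist_comm]
  set i := D - b with hi
  set x := W2.getVert i with hx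
  obtain ⟨hxu, hxw⟩ := dist_getVert_le' hH W2 i
  rw [← hx] at hxu hxw
  rw [hW2len] at hxw
  -- triangle: a ≤ d(u,x) + d(x,w)
  have htri : a ≤ H.dist u x + H.dist x w := by
    rw [ha, SimpleGraph.dist_comm]
    exact hH.dist_triangle
  -- apply key_walk to a shortest G-walk from x to w
  obtain ⟨W3, hW3⟩ := hG.exists_walk_length_eq_dist x w
  have h3 := key_walk u v hH W3
  simp only [← hHdef] at h3
  rw [hW3] at h3
  have hXw : G.dist x w ≤ D := hD1 x w
  have hcomm1 : H.dist x u = H.dist u x := SimpleGraph.dist_comm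
  have hcomm2 : H.dist v w = H.dist w v := SimpleGraph.dist_comm
  have hcomm3 : H.dist u w = H.dist w u := SimpleGraph.dist_comm
  rcases h3 with h | h | h
  · omega
  · rw [hcomm1, hcomm2] at h; omega
  · rw [hcomm3] at h; omega

theorem stmt7 {n : ℕ} (G : SimpleGraph (Fin n)) (hG : G.Connected)
    (D : ℕ) (hD1 : ∀ a b, G.dist a b ≤ D) (hD2 : ∃ a b, G.dist a b = D)
    (u v : Fin n) (huv : G.Adj u v)
    (hH : (G.deleteEdges {s(u, v)}).Connected) (w : Fin n) :
    (G.deleteEdges {s(u, v)}).dist w u + (G.deleteEdges {s(u, v)}).dist w v ≤ 2 * D := by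
  have hsw : ({s(v, u)} : Set (Sym2 (Fin n))) = {s(u, v)} := by rw [Sym2.eq_swap]
  rcases le_total ((G.deleteEdges {s(u, v)}).dist w v) ((G.deleteEdges {s(u, v)}).dist w u)
    with h | h
  · exact key_asym G hG D hD1 u v huv hH w h
  · have := key_asym G hG D hD1 v u huv.symm (by rw [hsw]; exact hH) w
      (by rw [hsw]; exact h)
    rw [hsw] at this
    omega
end
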